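/- arXiv:0804.3553 — 3 statements merged into one kernel-verified Lean document; each statement's English description precedes it below -/
import Mathlib

section
/- For a group G, an element ζ ∈ G with ζ^ℓ = 1 (ℓ a prime), and nonnegative integers s and i, the shuffle product of the bar-complex chains [ζ]^(s) and [ζ]^(i) equals binom(s+i, i) · [ζ]^(s+i), where [ζ]^(s) denotes the sum over all tuples (i_1,...,i_s) with 1 ≤ i_j ≤ ℓ−1 of the bar chain [ζ^{i_1}|ζ|ζ^{i_2}|ζ|...|ζ^{i_s}|ζ] in the degree-2s part of the normalized bar complex. -/
/-!
With `x a = ζ ^ (a + 1)` and `y = ζ`, the chain `[ζ]^(s)` is the normalization of the sum of all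
block words `x a₁ y x a₂ y ⋯ x a_s y`, and the identity holds already before normalizing, for
arbitrary `x` and `y`. Since `y` is repeated, `[y|u] ∧ [y|v] = 0` for block words `u`, `v`: the
two shuffles starting with `y` cancel. Hence a shuffle of block words never separates `x a` from
the `y` following it, and as blocks have even length it is the unsigned shuffle of the blocks;
summing over all block words gives each word of length `s + i` exactly `C(s+i, i)` times.
Normalization commutes with the shuffle product because every shuffle of `l` and `m` is a
permutation of `l ++ m`.
-/

open scoped Classical

open Finsupp

/-- Chains of the (normalized) bar complex of `G` over `k`: the free `k`-module
on lists of elements of `G`. -/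
abbrev BarChain (G : Type*) [Group G] (k : Type*) [CommRing k] := List G →₀ k

variable {G : Type*} [Group G] {k : Type*} [CommRing k]

/-- The normalized bar symbol `[x₁|...|x_s]`: zero if some entry equals `1`. -/
noncomputable def barSym (l : List G) : BarChain G k :=
  if (1 : G) ∈ l then 0 else Finsupp.single l 1

/-- Normalization map, killing all basis lists containing `1`. -/
noncomputable def barNorm : BarChain G k →ₗ[k] BarChain G k :=
  Finsupp.lsum k fun l => LinearMap.toSpanSingleton k _ (barSym l)

/-- Merge the `j`-th and `(j+1)`-st entries of a list by multiplying them. -/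
def mergeAt (l : List G) (j : ℕ) : List G :=
  l.take j ++ [l.getD j 1 * l.getD (j+1) 1] ++ l.drop (j+2)

/-- The boundary of a bar symbol (normalized convention: symbols with an entry
equal to `1` are zero). -/
noncomputable def barDList (l : List G) : BarChain G k :=
  if l = [] then 0 else
    barSym l.tail
      + ∑ j ∈ Finset.range (l.length - 1), ((-1 : k)^(j+1)) • barSym (mergeAt l j)
      + ((-1 : k)^l.length) • barSym l.dropLast

/-- The boundary operator of the normalized bar complex. -/
noncomputable def barD : BarChain G k →ₗ[k] BarChain G k :=
  Finsupp.lsum k fun l => LinearMap.toSpanSingleton k _ (barDList l)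

/-- The (signed) shuffle of two lists. -/
noncomputable def shuffleList : List G → List G → BarChain G k
  | [], l => Finsupp.single l 1
  | l, [] => Finsupp.single l 1
  | x :: xs, y :: ys =>
      Finsupp.mapDomain (x :: ·) (shuffleList xs (y :: ys))
        + ((-1 : k)^(xs.length + 1)) • Finsupp.mapDomain (y :: ·) (shuffleList (x :: xs) ys)
  termination_by l1 l2 => l1.length + l2.length

/-- The bilinear shuffle product on bar chains. -/
noncomputable def barSh : BarChain G k →ₗ[k] BarChain G k →ₗ[k] BarChain G k :=
  Finsupp.lsum k fun l1 => LinearMap.toSpanSingleton k _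
    ((Finsupp.lsum k fun l2 => LinearMap.toSpanSingleton k _ (shuffleList l1 l2) :
      BarChain G k →ₗ[k] BarChain G k))

/-- The shuffle product in the normalized bar complex. -/
noncomputable def barNSh (a b : BarChain G k) : BarChain G k :=
  barNorm (barSh a b)

/-- The chain `[ζ]^(s) = Σ_{i₁,...,i_s = 1}^{ℓ-1} [ζ^{i₁}|ζ|...|ζ^{i_s}|ζ]`. -/
noncomputable def zetaChain (ℓ : ℕ) (ζ : G) (s : ℕ) : BarChain G k :=
  ∑ f : Fin s → Fin (ℓ - 1),
    barSym ((List.ofFn (fun j => [ζ ^ ((f j : ℕ) + 1), ζ])).flatten)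

/-- The iterated shuffle product `⟨x₁,...,x_i⟩ = [x₁] ∧ ... ∧ [x_i]`. -/
noncomputable def wedgeList (l : List G) : BarChain G k :=
  l.foldr (fun g acc => barNSh (barSym [g]) acc) (barSym [])

noncomputable def barCons (g : G) : BarChain G k →ₗ[k] BarChain G k :=
  Finsupp.lmapDomain k k (List.cons g)

@[simp]
lemma barCons_single (g : G) (l : List G) (c : k) :
    barCons g (single l c) = single (g :: l) c :=
  Finsupp.mapDomain_single

@[simp]
lemma shuffleList_nil_left (l : List G) : (shuffleList [] l : BarChain G k) = single l 1 := by
  rw [shuffleList]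

@[simp]
lemma shuffleList_nil_right (l : List G) : (shuffleList l [] : BarChain G k) = single l 1 := by
  cases l <;> simp [shuffleList]

lemma shuffleList_cons_cons (x y : G) (xs ys : List G) :
    (shuffleList (x :: xs) (y :: ys) : BarChain G k) =
      barCons x (shuffleList xs (y :: ys))
        + (-1 : k) ^ (xs.length + 1) • barCons y (shuffleList (x :: xs) ys) := by
  rw [shuffleList]; rfl

lemma perm_of_mem_support_shuffleList (l m : List G) :
    ∀ w ∈ (shuffleList l m : BarChain G k).support, w.Perm (l ++ m) := by
  induction l, m using shuffleList.induct with
  | case1 m =>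
    intro w hw
    rw [shuffleList_nil_left] at hw
    rw [Finset.mem_singleton.mp (Finsupp.support_single_subset hw), List.nil_append]
  | case2 l =>
    intro w hw
    rw [shuffleList_nil_right] at hw
    rw [Finset.mem_singleton.mp (Finsupp.support_single_subset hw), List.append_nil]
  | case3 x xs y ys ih₁ ih₂ =>
    intro w hw
    rw [shuffleList_cons_cons] at hw
    rcases Finset.mem_union.mp (Finsupp.support_add hw) with hw | hw
    · obtain ⟨w', hw', rfl⟩ := Finset.mem_image.mp (Finsupp.mapDomain_support hw)
      exact (ih₁ w' hw').cons x
    · obtain ⟨w', hw', rfl⟩ :=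
        Finset.mem_image.mp (Finsupp.mapDomain_support (Finsupp.support_smul hw))
      exact ((ih₂ w' hw').cons y).trans List.perm_middle.symm

lemma barNorm_single (l : List G) : barNorm (single l (1 : k)) = barSym l := by
  simp [barNorm]

lemma barSh_single (l m : List G) :
    barSh (single l (1 : k)) (single m 1) = shuffleList l m := by
  simp [barSh]

lemma barNorm_eq_zero_of_forall_one_mem {v : BarChain G k} (h : ∀ w ∈ v.support, (1 : G) ∈ w) :
    barNorm v = 0 := by
  rw [barNorm, Finsupp.lsum_apply, Finsupp.sum]
  exact Finset.sum_eq_zero fun w hw => by simp [barSym, h w hw]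

lemma barNorm_shuffleList_of_one_mem {l m : List G} (h : (1 : G) ∈ l ∨ (1 : G) ∈ m) :
    barNorm (shuffleList l m : BarChain G k) = 0 :=
  barNorm_eq_zero_of_forall_one_mem fun w hw =>
    (perm_of_mem_support_shuffleList l m w hw).mem_iff.mpr (List.mem_append.mpr h)

lemma barNorm_barSh_barNorm (a b : BarChain G k) :
    barNorm (barSh (barNorm a) (barNorm b)) = barNorm (barSh a b) := by
  suffices h : (barSh.compl₁₂ barNorm barNorm).compr₂ barNorm
      = (barSh : BarChain G k →ₗ[k] _ →ₗ[k] _).compr₂ barNorm from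
    congrArg (fun φ => φ a b) h
  ext l m
  simp only [LinearMap.compr₂_apply, LinearMap.compl₁₂_apply, LinearMap.coe_comp,
    Function.comp_apply, Finsupp.lsingle_apply, barNorm_single, barSym]
  by_cases hl : (1 : G) ∈ l
  · simp [hl, barSh_single, barNorm_shuffleList_of_one_mem (Or.inl hl)]
  by_cases hm : (1 : G) ∈ m
  · simp [hm, barSh_single, barNorm_shuffleList_of_one_mem (Or.inr hm)]
  · simp [hl, hm]

lemma shuffleList_cons_cons_of_even {g : G} {u v : List G} (h : Even u.length) :
    (shuffleList (g :: u) (g :: v) : BarChain G k)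
      = barCons g (shuffleList u (g :: v) - shuffleList (g :: u) v) := by
  rw [shuffleList_cons_cons, (h.add_one).neg_one_pow, neg_one_smul, map_sub, sub_eq_add_neg]

section BlockWord

variable {α ι : Type*} (x : ι → α) (y : α)

def blockWord (l : List ι) : List α := l.flatMap fun a => [x a, y]

@[simp]
lemma blockWord_nil : blockWord x y [] = [] := rfl

@[simp]
lemma blockWord_cons (a : ι) (l : List ι) : blockWord x y (a :: l) = x a :: y :: blockWord x y l :=
  rfl

lemma even_length_blockWord (l : List ι) : Even (blockWord x y l).length := by
  induction l with
  | nil => exact ⟨0, rfl⟩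
  | cons a l ih => simpa [parity_simps] using ih

lemma blockWord_ofFn {n : ℕ} (f : Fin n → ι) :
    blockWord x y (List.ofFn f) = (List.ofFn fun j => [x (f j), y]).flatten := by
  rw [blockWord, List.flatMap_def, List.map_ofFn]
  rfl

end BlockWord

section ShuffleBlockWord

variable {ι : Type*} (x : ι → G) (y : G)

lemma shuffleList_blockWord_cons_blockWord_of_eq_zero (a : ι) (l m : List ι)
    (h : (shuffleList (y :: blockWord x y l) (y :: blockWord x y m) : BarChain G k) = 0) :
    (shuffleList (blockWord x y (a :: l)) (y :: blockWord x y m) : BarChain G k)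
      = barCons y (shuffleList (blockWord x y (a :: l)) (blockWord x y m)) := by
  rw [blockWord_cons, shuffleList_cons_cons, h, map_zero, zero_add, List.length_cons,
    (even_length_blockWord x y l).add_one.add_one.neg_one_pow, one_smul]

lemma shuffleList_cons_blockWord_blockWord_of_eq_zero (l : List ι) (b : ι) (m : List ι)
    (h : (shuffleList (y :: blockWord x y l) (y :: blockWord x y m) : BarChain G k) = 0) :
    (shuffleList (y :: blockWord x y l) (blockWord x y (b :: m)) : BarChain G k)
      = barCons y (shuffleList (blockWord x y l) (blockWord x y (b :: m))) := by
  rw [blockWord_cons, shuffleList_cons_cons, h, map_zero, smul_zero, add_zero]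

theorem shuffleList_cons_blockWord_cons_blockWord (l m : List ι) :
    (shuffleList (y :: blockWord x y l) (y :: blockWord x y m) : BarChain G k) = 0 := by
  induction l generalizing m with
  | nil =>
    induction m with
    | nil => simp [shuffleList_cons_cons]
    | cons b m ihm =>
      rw [shuffleList_cons_cons_of_even (even_length_blockWord x y []),
        shuffleList_cons_blockWord_blockWord_of_eq_zero x y [] b m ihm]
      simp
  | cons a l ihl =>
    induction m with
    | nil =>
      rw [shuffleList_cons_cons_of_even (even_length_blockWord x y _),
        shuffleList_blockWord_cons_blockWord_of_eq_zero x y a l [] (ihl [])]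
      simp
    | cons b m ihm =>
      rw [shuffleList_cons_cons_of_even (even_length_blockWord x y _),
        shuffleList_blockWord_cons_blockWord_of_eq_zero x y a l _ (ihl _),
        shuffleList_cons_blockWord_blockWord_of_eq_zero x y _ b m ihm, sub_self, map_zero]

lemma shuffleList_blockWord_cons_blockWord (l m : List ι) :
    (shuffleList (blockWord x y l) (y :: blockWord x y m) : BarChain G k)
      = barCons y (shuffleList (blockWord x y l) (blockWord x y m)) := by
  cases l with
  | nil => simp
  | cons a l =>
    exact shuffleList_blockWord_cons_blockWord_of_eq_zero x y a l m
      (shuffleList_cons_blockWord_cons_blockWord x y l m)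

lemma shuffleList_cons_blockWord_blockWord (l m : List ι) :
    (shuffleList (y :: blockWord x y l) (blockWord x y m) : BarChain G k)
      = barCons y (shuffleList (blockWord x y l) (blockWord x y m)) := by
  cases m with
  | nil => simp
  | cons b m =>
    exact shuffleList_cons_blockWord_blockWord_of_eq_zero x y l b m
      (shuffleList_cons_blockWord_cons_blockWord x y l m)

theorem shuffleList_blockWord_cons_blockWord_cons (a : ι) (l : List ι) (b : ι) (m : List ι) :
    (shuffleList (blockWord x y (a :: l)) (blockWord x y (b :: m)) : BarChain G k)
      = barCons (x a) (barCons y (shuffleList (blockWord x y l) (blockWord x y (b :: m))))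
        + barCons (x b) (barCons y (shuffleList (blockWord x y (a :: l)) (blockWord x y m))) := by
  conv_lhs => rw [blockWord_cons x y a, blockWord_cons x y b, shuffleList_cons_cons,
    ← blockWord_cons x y a, ← blockWord_cons x y b, shuffleList_cons_blockWord_blockWord,
    shuffleList_blockWord_cons_blockWord, List.length_cons,
    (even_length_blockWord x y l).add_one.add_one.neg_one_pow, one_smul]

end ShuffleBlockWord

lemma barSh_single_nil_left (v : BarChain G k) : barSh (single [] 1) v = v := by
  suffices h : barSh (single [] (1 : k)) = LinearMap.id from LinearMap.congr_fun h v
  ext m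
  simp [barSh_single]

lemma barSh_single_nil_right (v : BarChain G k) : barSh v (single [] 1) = v := by
  suffices h : (barSh : BarChain G k →ₗ[k] _ →ₗ[k] _).flip (single [] 1) = LinearMap.id from
    LinearMap.congr_fun h v
  ext m
  simp [barSh_single]

lemma Fintype.sum_fin_succ_pi {ι M : Type*} [Fintype ι] [AddCommMonoid M] {n : ℕ}
    (F : (Fin (n + 1) → ι) → M) :
    ∑ f, F f = ∑ a, ∑ f : Fin n → ι, F (Fin.cons a f) := by
  rw [← Fintype.sum_prod_type']
  exact (Fintype.sum_equiv (Fin.consEquiv fun _ => ι) _ _ fun _ => rfl).symm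

section BlockChain

variable {ι : Type*} [Fintype ι] (x : ι → G) (y : G)

noncomputable def blockChain (n : ℕ) : BarChain G k :=
  ∑ f : Fin n → ι, single (blockWord x y (List.ofFn f)) 1

lemma blockChain_zero : (blockChain x y 0 : BarChain G k) = single [] 1 := by
  simp [blockChain]

lemma blockChain_succ (n : ℕ) :
    (blockChain x y (n + 1) : BarChain G k) = ∑ a, barCons (x a) (barCons y (blockChain x y n)) := by
  simp [blockChain, Fintype.sum_fin_succ_pi, List.ofFn_succ, map_sum]

lemma barSh_blockChain_succ_succ (s i : ℕ) :
    (barSh (blockChain x y (s + 1)) (blockChain x y (i + 1)) : BarChain G k)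
      = ∑ a, barCons (x a) (barCons y (barSh (blockChain x y s) (blockChain x y (i + 1))))
        + ∑ b, barCons (x b) (barCons y (barSh (blockChain x y (s + 1)) (blockChain x y i))) := by
  simp only [blockChain, Fintype.sum_fin_succ_pi, List.ofFn_succ, Fin.cons_zero, Fin.cons_succ,
    map_sum, LinearMap.sum_apply, barSh_single, shuffleList_blockWord_cons_blockWord_cons,
    Finset.sum_add_distrib]
  congr 1
  exact (Finset.sum_comm.trans (Finset.sum_congr rfl fun _ _ => Finset.sum_comm)).symm

theorem barSh_blockChain (s i : ℕ) :
    (barSh (blockChain x y s) (blockChain x y i) : BarChain G k)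
      = ((s + i).choose i : k) • blockChain x y (s + i) := by
  induction s generalizing i with
  | zero => simp [blockChain_zero, barSh_single_nil_left]
  | succ s ihs =>
    induction i with
    | zero => simp [blockChain_zero, barSh_single_nil_right]
    | succ i ihi =>
      rw [barSh_blockChain_succ_succ, ihs, ihi, show s + (i + 1) = s + 1 + i by omega,
        show s + 1 + (i + 1) = s + 1 + i + 1 by omega, blockChain_succ, Nat.choose_succ_succ',
        Nat.cast_add, add_smul, Finset.smul_sum, Finset.smul_sum]
      simp only [map_smul]
      exact add_comm _ _

end BlockChain

lemma zetaChain_eq_barNorm_blockChain (ℓ : ℕ) (ζ : G) (n : ℕ) :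
    (zetaChain ℓ ζ n : BarChain G k)
      = barNorm (blockChain (fun a : Fin (ℓ - 1) => ζ ^ ((a : ℕ) + 1)) ζ n) := by
  simp only [zetaChain, blockChain, map_sum, barNorm_single, blockWord_ofFn]

theorem stmt0_general {G : Type*} [Group G] {k : Type*} [CommRing k]
    (ℓ : ℕ) (ζ : G) (s i : ℕ) :
    barNSh (zetaChain ℓ ζ s : BarChain G k) (zetaChain ℓ ζ i)
      = ((s + i).choose i : k) • zetaChain ℓ ζ (s + i) := by
  simp only [barNSh, zetaChain_eq_barNorm_blockChain, barNorm_barSh_barNorm, barSh_blockChain,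
    map_smul]

/-- `[ζ]^(s) ∧ [ζ]^(i) = C(s+i, i) · [ζ]^(s+i)`. -/
theorem stmt0 {G : Type*} [Group G] {k : Type*} [CommRing k]
    (ℓ : ℕ) (hℓ : ℓ.Prime) (ζ : G) (hζ : ζ ^ ℓ = 1) (s i : ℕ) :
    barNSh (zetaChain ℓ ζ s : BarChain G k) (zetaChain ℓ ζ i)
      = ((s + i).choose i : k) • zetaChain ℓ ζ (s + i) :=
  stmt0_general ℓ ζ s i
end

section
/- Let ℓ be an odd prime, ξ a primitive ℓ-th root of unity in C, and R = Z[1/ℓ, ξ]. Then ℓ = (−1)^r λ² in R, where r = (ℓ−1)/2 and λ = ξ^c (1−ξ)(1−ξ²)···(1−ξ^r), with c ≥ 0 the smallest integer such that 2c ≡ r² + r(r+1)/2 (mod ℓ). -/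
/-!
Since `ξ` is a primitive `ℓ`-th root of unity, `∏_{i=1}^{ℓ-1} (1 - ξ^i) = ℓ`. For `i ≤ r` the factor
`1 - ξ^(ℓ-i)` of the upper half equals `-ξ^(ℓ-i) (1 - ξ^i)`, so the product is
`(-1)^r ξ^S (∏_{i=1}^r (1 - ξ^i))²` with `S = ∑_{i=1}^r (ℓ - i) = r² + r(r+1)/2`,
and `ξ^S = ξ^(2c)` by the choice of `c`.
-/

open Finset

section ReflectedProduct

variable {R : Type*} [CommRing R] {ξ : R} {n : ℕ}

theorem one_sub_pow_sub_of_pow_eq_one (h : ξ ^ n = 1) {i : ℕ} (hi : i ≤ n) :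
    1 - ξ ^ (n - i) = -ξ ^ (n - i) * (1 - ξ ^ i) := by
  have hmul : ξ ^ (n - i) * ξ ^ i = 1 := by rw [← pow_add, Nat.sub_add_cancel hi, h]
  linear_combination -hmul

theorem prod_one_sub_pow_sub_of_pow_eq_one (h : ξ ^ n = 1) {s : Finset ℕ} (hs : ∀ i ∈ s, i ≤ n) :
    ∏ i ∈ s, (1 - ξ ^ (n - i)) =
      (-1) ^ #s * ξ ^ (∑ i ∈ s, (n - i)) * ∏ i ∈ s, (1 - ξ ^ i) := by
  have hneg (i : ℕ) : -ξ ^ (n - i) = -1 * ξ ^ (n - i) := (neg_one_mul _).symm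
  rw [prod_congr rfl fun i hi ↦ one_sub_pow_sub_of_pow_eq_one h (hs i hi), prod_mul_distrib]
  simp only [hneg, prod_mul_distrib, prod_const, prod_pow_eq_pow_sum]

theorem prod_Icc_one_sub_pow_of_pow_two_mul_add_one_eq_one {r : ℕ} (h : ξ ^ (2 * r + 1) = 1) :
    ∏ i ∈ Icc 1 (2 * r), (1 - ξ ^ i) =
      (-1) ^ r * ξ ^ (∑ i ∈ Icc 1 r, (2 * r + 1 - i)) * (∏ i ∈ Icc 1 r, (1 - ξ ^ i)) ^ 2 := by
  have hupper : ∏ i ∈ Ico (r + 1) (2 * r + 1), (1 - ξ ^ i) =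
      ∏ i ∈ Icc 1 r, (1 - ξ ^ (2 * r + 1 - i)) := by
    have hreflect := prod_Ico_reflect (fun i ↦ 1 - ξ ^ i) 1 (by omega : r + 1 ≤ 2 * r + 1 + 1)
    beta_reduce at hreflect
    rw [← Ico_add_one_right_eq_Icc, hreflect]
    congr 2; omega
  rw [← Ico_add_one_right_eq_Icc, ← prod_Ico_consecutive _ (by omega : 1 ≤ r + 1) (by omega),
    hupper, prod_one_sub_pow_sub_of_pow_eq_one h fun i hi ↦ by simp only [mem_Icc] at hi; omega,
    Nat.card_Icc, Nat.add_sub_cancel, Ico_add_one_right_eq_Icc]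
  ring

end ReflectedProduct

theorem IsPrimitiveRoot.prod_Icc_one_sub_pow {R : Type*} [CommRing R] [IsDomain R] {ξ : R}
    {n : ℕ} (hξ : IsPrimitiveRoot ξ (n + 1)) : ∏ i ∈ Icc 1 n, (1 - ξ ^ i) = n + 1 := by
  rw [← hξ.prod_one_sub_pow_eq_order, ← Ico_add_one_right_eq_Icc, ← prod_Ico_add' _ 0 n 1,
    ← range_eq_Ico]

theorem sum_Icc_two_mul_add_one_sub (r : ℕ) :
    ∑ i ∈ Icc 1 r, (2 * r + 1 - i) = r ^ 2 + r * (r + 1) / 2 := by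
  have hsum : ∑ i ∈ Icc 1 r, (2 * r + 1 - i) + ∑ i ∈ Icc 1 r, i = r * (2 * r + 1) := by
    rw [← sum_add_distrib, sum_congr rfl fun i hi ↦ Nat.sub_add_cancel (by simp only [mem_Icc] at hi; omega),
      sum_const, Nat.card_Icc, smul_eq_mul, Nat.add_sub_cancel]
  have hgauss : (∑ i ∈ Icc 1 r, i) * 2 = r * (r + 1) := by
    have h := sum_range_id_mul_two (r + 1)
    rwa [range_eq_Ico, sum_eq_sum_Ico_succ_bot (by omega), zero_add, Ico_add_one_right_eq_Icc,
      Nat.add_sub_cancel, mul_comm (r + 1)] at h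
  have hsq : r * (2 * r + 1) = r ^ 2 + r * (r + 1) := by ring
  generalize ∑ i ∈ Icc 1 r, (2 * r + 1 - i) = S at *
  generalize ∑ i ∈ Icc 1 r, i = T at *
  generalize r * (r + 1) = P at *
  omega

theorem stmt5_general (ℓ r : ℕ) (hr : ℓ = 2 * r + 1)
    (ξ : ℂ) (hξ : IsPrimitiveRoot ξ ℓ)
    (c : ℕ) (hc : 2 * c ≡ r ^ 2 + r * (r + 1) / 2 [MOD ℓ]) :
    (ℓ : ℂ) = (-1 : ℂ) ^ r * (ξ ^ c * ∏ i ∈ Finset.Icc 1 r, (1 - ξ ^ i)) ^ 2 := by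
  subst hr
  have hpow : ξ ^ (c * 2) = ξ ^ ∑ i ∈ Icc 1 r, (2 * r + 1 - i) := by
    rw [sum_Icc_two_mul_add_one_sub, mul_comm]
    exact pow_eq_pow_of_modEq hc hξ.pow_eq_one
  rw [mul_pow, ← pow_mul, hpow, ← mul_assoc,
    ← prod_Icc_one_sub_pow_of_pow_two_mul_add_one_eq_one hξ.pow_eq_one,
    hξ.prod_Icc_one_sub_pow]
  push_cast
  rfl

/-- in `R = ℤ[1/ℓ, ξ]` (viewed inside `ℂ`), `ℓ = (-1)^r λ²` where
`λ = ξ^c (1-ξ)(1-ξ²)⋯(1-ξ^r)`, `ℓ = 2r+1`, and `c` is the smallest nonnegative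
integer with `2c ≡ r² + r(r+1)/2 (mod ℓ)`. -/
theorem stmt5 (ℓ r : ℕ) (hℓ : ℓ.Prime) (hr : ℓ = 2 * r + 1) (hr0 : 0 < r)
    (ξ : ℂ) (hξ : IsPrimitiveRoot ξ ℓ)
    (c : ℕ) (hc : 2 * c ≡ r ^ 2 + r * (r + 1) / 2 [MOD ℓ])
    (hcmin : ∀ c' : ℕ, c' < c → ¬ (2 * c' ≡ r ^ 2 + r * (r + 1) / 2 [MOD ℓ])) :
    (ℓ : ℂ) = (-1 : ℂ) ^ r * (ξ ^ c * ∏ i ∈ Finset.Icc 1 r, (1 - ξ ^ i)) ^ 2 :=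
  stmt5_general ℓ r hr ξ hξ c hc
end

section
/- The group SE₂ over R = Z[1/ℓ, ξ] (ℓ an odd regular prime) is a perfect group, i.e., equals its own commutator subgroup. -/
/-- The Cohn relations defining `SE₂` over a commutative ring `R`: generators
`D u` (`u ∈ Rˣ`) and `E x` (`x ∈ R`), relations
(I) `E x · E 0 · E y = D (-1) · E (x+y)`,
(II) `E x = D u · E (x u²) · D u`,
(III) `E u⁻¹ · E u · E u⁻¹ = D (-u)`,
(IV) `D u · D v = D (u v)`. -/
def SE2Rels (R : Type*) [CommRing R] : Set (FreeGroup ((Rˣ) ⊕ R)) :=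
  {w | (∃ x y : R,
          w = FreeGroup.of (Sum.inr x) * FreeGroup.of (Sum.inr (0 : R)) *
              FreeGroup.of (Sum.inr y) *
              (FreeGroup.of (Sum.inl (-1 : Rˣ)) * FreeGroup.of (Sum.inr (x + y)))⁻¹)
     ∨ (∃ (x : R) (u : Rˣ),
          w = FreeGroup.of (Sum.inr x) *
              (FreeGroup.of (Sum.inl u) * FreeGroup.of (Sum.inr (x * (u : R) ^ 2)) *
               FreeGroup.of (Sum.inl u))⁻¹)
     ∨ (∃ u : Rˣ,
          w = FreeGroup.of (Sum.inr ((u⁻¹ : Rˣ) : R)) * FreeGroup.of (Sum.inr ((u : Rˣ) : R)) *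
              FreeGroup.of (Sum.inr ((u⁻¹ : Rˣ) : R)) *
              (FreeGroup.of (Sum.inl (-u)))⁻¹)
     ∨ (∃ u v : Rˣ,
          w = FreeGroup.of (Sum.inl u) * FreeGroup.of (Sum.inl v) *
              (FreeGroup.of (Sum.inl (u * v)))⁻¹)}

/-- The group `SE₂` over `R`, presented by the Cohn relations. -/
abbrev SE2 (R : Type*) [CommRing R] := PresentedGroup (SE2Rels R)

/-- The generator `D u` of `SE₂`. -/
def SE2.D {R : Type*} [CommRing R] (u : Rˣ) : SE2 R := PresentedGroup.of (Sum.inl u)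

/-- The generator `E x` of `SE₂`. -/
def SE2.E {R : Type*} [CommRing R] (x : R) : SE2 R := PresentedGroup.of (Sum.inr x)

/-!
In the abelianization, relation (II) makes `x ↦ E x / E 0` an additive map invariant under
multiplication by squares of units. Every power of `ξ` is such a square since `ℓ` is odd, so
`ℓ` times the map is the map evaluated at `x (1 + ξ + ⋯ + ξ^(ℓ-1)) = 0`; as `ℓ²` is also a
square of a unit, the map vanishes. Hence all `E x` agree in the abelianization, and relation
(III) then kills `E 0` and every `D u`.
-/

section SquareInvariant

variable {R M : Type*} [CommRing R] [AddCommGroup M]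

theorem AddMonoidHom.eq_zero_of_map_mul_sq_eq (f : R →+ M)
    (hf : ∀ (x : R) (u : Rˣ), f (x * (u : R) ^ 2) = f x) {ℓ : ℕ} (hℓ : Odd ℓ)
    (hℓu : IsUnit (ℓ : R)) {ξ : R} (hξ : ξ ^ ℓ = 1)
    (hsum : ∑ i ∈ Finset.range ℓ, ξ ^ i = 0) : f = 0 := by
  obtain ⟨k, hk⟩ := hℓ
  have hξu : IsUnit ξ := .of_pow_eq_one hξ (by omega)
  have hpow : ∀ (i : ℕ) (x : R), f (x * ξ ^ i) = f x := fun i x => by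
    have hsq : ξ ^ i = ((hξu.unit ^ (i * (k + 1)) : Rˣ) : R) ^ 2 := by
      rw [Units.val_pow_eq_pow_val, IsUnit.unit_spec, ← pow_mul,
        show i * (k + 1) * 2 = ℓ * i + i by rw [hk]; ring, pow_add, pow_mul, hξ, one_pow,
        one_mul]
    rw [hsq, hf]
  have hℓf : ∀ x, ℓ • f x = 0 := fun x =>
    calc ℓ • f x = ∑ i ∈ Finset.range ℓ, f (x * ξ ^ i) := by
          simp only [hpow, Finset.sum_const, Finset.card_range]
      _ = 0 := by rw [← map_sum, ← Finset.mul_sum, hsum, mul_zero, map_zero]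
  ext x
  calc f x = f (x * (hℓu.unit : R) ^ 2) := (hf x _).symm
    _ = f (ℓ • ℓ • x) := by rw [IsUnit.unit_spec, smul_smul, nsmul_eq_mul]; push_cast; ring_nf
    _ = 0 := by rw [map_nsmul, map_nsmul, hℓf, smul_zero]

end SquareInvariant

namespace SE2

variable {R A : Type*} [CommRing R] [CommGroup A]

theorem mk_eq_one_of_mem_rels {w : FreeGroup ((Rˣ) ⊕ R)} (h : w ∈ SE2Rels R) :
    PresentedGroup.mk (SE2Rels R) w = 1 :=
  (QuotientGroup.eq_one_iff w).mpr (Subgroup.subset_normalClosure h)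

theorem E_mul_E_zero_mul_E (x y : R) : E x * E 0 * E y = D (-1) * E (x + y) := by
  have h := mk_eq_one_of_mem_rels (Or.inl ⟨x, y, rfl⟩)
  rwa [map_mul, map_mul, map_mul, map_inv, map_mul, mul_inv_eq_one] at h

theorem E_eq_D_mul_E_mul_D (x : R) (u : Rˣ) : E x = D u * E (x * (u : R) ^ 2) * D u := by
  have h := mk_eq_one_of_mem_rels (Or.inr (Or.inl ⟨x, u, rfl⟩))
  rwa [map_mul, map_inv, map_mul, map_mul, mul_inv_eq_one] at h

theorem E_inv_mul_E_mul_E_inv (u : Rˣ) :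
    E ((u⁻¹ : Rˣ) : R) * E (u : R) * E ((u⁻¹ : Rˣ) : R) = D (-u) := by
  have h := mk_eq_one_of_mem_rels (Or.inr (Or.inr (Or.inl ⟨u, rfl⟩)))
  rwa [map_mul, map_mul, map_mul, map_inv, mul_inv_eq_one] at h

variable (φ : SE2 R →* A)

theorem map_D_mul_self (u : Rˣ) : φ (D u) * φ (D u) = 1 := by
  have h := congrArg φ (E_eq_D_mul_E_mul_D 0 u)
  rw [zero_mul, map_mul, map_mul, mul_right_comm] at h
  exact (mul_eq_right.mp h.symm)

theorem map_E_mul_sq (x : R) (u : Rˣ) : φ (E (x * (u : R) ^ 2)) = φ (E x) := by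
  have h := congrArg φ (E_eq_D_mul_E_mul_D x u)
  rw [map_mul, map_mul, mul_right_comm, map_D_mul_self, one_mul] at h
  exact h.symm

theorem map_D_neg_one : φ (D (-1)) = φ (E 0) * φ (E 0) := by
  have h := congrArg φ (E_mul_E_zero_mul_E (0 : R) 0)
  rw [add_zero, map_mul, map_mul, map_mul] at h
  exact (mul_right_cancel h).symm

theorem map_E_mul_map_E (x y : R) : φ (E x) * φ (E y) = φ (E 0) * φ (E (x + y)) := by
  have h := congrArg φ (E_mul_E_zero_mul_E x y)
  rw [map_mul, map_mul, map_mul, map_D_neg_one, mul_right_comm, mul_assoc (φ (E 0)),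
    mul_comm (φ (E 0)) (φ (E 0) * _)] at h
  exact mul_right_cancel h

def divEZeroHom : R →+ Additive A :=
  AddMonoidHom.mk' (fun x => Additive.ofMul (φ (E x) / φ (E 0))) fun x y => by
    rw [← ofMul_mul, div_mul_div_comm, map_E_mul_map_E, mul_div_mul_left_eq_div]

theorem map_eq_one {ℓ : ℕ} (hℓ : Odd ℓ) (hℓu : IsUnit (ℓ : R)) {ξ : R} (hξ : ξ ^ ℓ = 1)
    (hsum : ∑ i ∈ Finset.range ℓ, ξ ^ i = 0) : φ = 1 := by
  have hE : ∀ x, φ (E x) = φ (E 0) := fun x => by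
    have h := (divEZeroHom φ).eq_zero_of_map_mul_sq_eq
      (fun x u => by simp only [divEZeroHom, AddMonoidHom.mk'_apply, map_E_mul_sq]) hℓ hℓu hξ hsum
    exact div_eq_one.mp (congrArg Additive.toMul (DFunLike.congr_fun h x))
  have hE0 : φ (E 0) = 1 := by
    have h := congrArg φ (E_inv_mul_E_mul_E_inv (1 : Rˣ))
    rw [inv_one, Units.val_one, map_mul, map_mul, map_D_neg_one, hE 1] at h
    exact mul_eq_left.mp h
  have hD : ∀ u : Rˣ, φ (D u) = 1 := fun u => by
    have h := congrArg φ (E_inv_mul_E_mul_E_inv (-u))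
    rw [map_mul, map_mul, hE ((-u)⁻¹ : Rˣ), hE (-u : Rˣ), hE0, neg_neg, one_mul, one_mul] at h
    exact h.symm
  refine PresentedGroup.ext fun
    | .inl u => hD u
    | .inr x => (hE x).trans hE0

theorem commutator_eq_top {ℓ : ℕ} (hℓ : Odd ℓ) (hℓu : IsUnit (ℓ : R)) {ξ : R}
    (hξ : ξ ^ ℓ = 1) (hsum : ∑ i ∈ Finset.range ℓ, ξ ^ i = 0) : commutator (SE2 R) = ⊤ := by
  rw [← Abelianization.ker_of, map_eq_one Abelianization.of hℓ hℓu hξ hsum]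
  exact MonoidHom.ker_one

end SE2

/-- for `ℓ = 2r+1` an odd regular prime and `R = ℤ[1/ℓ, ξ]`
(realized inside `ℂ`), the group `SE₂(R)` is perfect. -/
theorem stmt14 (ℓ r : ℕ) (hr : ℓ = 2 * r + 1) (hr0 : 0 < r)
    (ξ : ℂ) (hξ : IsPrimitiveRoot ξ ℓ) :
    commutator (SE2 ↥(Algebra.adjoin ℤ ({(ℓ : ℂ)⁻¹, ξ} : Set ℂ))) = ⊤ := by
  set R := Algebra.adjoin ℤ ({(ℓ : ℂ)⁻¹, ξ} : Set ℂ)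
  let ξR : R := ⟨ξ, Algebra.subset_adjoin (by simp)⟩
  let ℓInv : R := ⟨(ℓ : ℂ)⁻¹, Algebra.subset_adjoin (by simp)⟩
  have hℓu : IsUnit (ℓ : R) := .of_mul_eq_one ℓInv <| Subtype.ext <| by
    push_cast
    exact mul_inv_cancel₀ (by exact_mod_cast (show ℓ ≠ 0 by omega))
  refine SE2.commutator_eq_top ⟨r, hr⟩ hℓu (ξ := ξR) (Subtype.ext ?_) (Subtype.ext ?_)
  · push_cast
    exact hξ.pow_eq_one
  · push_cast
    exact hξ.geom_sum_eq_zero (by omega)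
end
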